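/- arXiv:1212.1078 — 5 statements merged into one kernel-verified Lean document; each statement's English description precedes it below -/
import Mathlib

section
/- Local pseudoconvexity of the Hartogs-type hypersurface: let ρ : U → ℝ (U ⊂ ℂ^n open) be smooth with ∇ρ ≠ 0 and −(−ρ)^s strictly plurisubharmonic on {ρ<0} for some s ∈ (0,1], and let h : V → ℝ₊ (V ⊂ ℂ^m open neighborhood of 0) be smooth with h(w)=0 ⟺ w=0, ∇h(w)≠0 for w≠0, and h^{s'} plurisubharmonic on V for some s' ∈ [0,s). Then at every point (z¹,w¹) of ∂G̃ = {(z,w) ∈ U×V : ρ(z)+h(w)=0}, the restriction of the complex Hessian of r(z,w)=ρ(z)+h(w) to the complex tangent space of ∂G̃ is nonnegative; moreover if w¹ ≠ 0 and h is strictly plurisubharmonic at w¹, this restriction is positive definite. -/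
open Filter Topology

/-- Wirtinger derivative ∂f/∂z_j. -/
noncomputable def wd {d : ℕ} (j : Fin d) (f : (Fin d → ℂ) → ℂ) (z : Fin d → ℂ) : ℂ :=
  (fderiv ℝ f z (Pi.single j 1) - Complex.I * fderiv ℝ f z (Pi.single j Complex.I)) / 2

/-- Wirtinger derivative ∂f/∂z̄_j. -/
noncomputable def wdbar {d : ℕ} (j : Fin d) (f : (Fin d → ℂ) → ℂ) (z : Fin d → ℂ) : ℂ :=
  (fderiv ℝ f z (Pi.single j 1) + Complex.I * fderiv ℝ f z (Pi.single j Complex.I)) / 2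

/-- The complex Hessian (Levi) form ∑_{j,k} ∂²f/∂z_j∂z̄_k t_j t̄_k (real part). -/
noncomputable def hessForm {d : ℕ} (f : (Fin d → ℂ) → ℂ) (z t : Fin d → ℂ) : ℝ :=
  (∑ j, ∑ k, wd j (fun w => wdbar k f w) z * t j * (starRingEnd ℂ) (t k)).re

/-- The pairing ⟨∂f(z), t⟩ = ∑_j ∂f/∂z_j(z) t_j. -/
noncomputable def dpair {d : ℕ} (f : (Fin d → ℂ) → ℂ) (z t : Fin d → ℂ) : ℂ :=
  ∑ j, wd j f z * t j

lemma wd_smooth {d : ℕ} {S : Set (Fin d → ℂ)} (hS : IsOpen S) {f : (Fin d → ℂ) → ℂ}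
    {k : WithTop ℕ∞} (hf : ContDiffOn ℝ (k + 1) f S) (j : Fin d) :
    ContDiffOn ℝ k (wd j f) S := by
  have hd : ContDiffOn ℝ k (fderiv ℝ f) S := hf.fderiv_of_isOpen hS le_rfl
  have h1 : ContDiffOn ℝ k (fun z => fderiv ℝ f z (Pi.single j 1)) S :=
    hd.clm_apply contDiffOn_const
  have h2 : ContDiffOn ℝ k (fun z => fderiv ℝ f z (Pi.single j Complex.I)) S :=
    hd.clm_apply contDiffOn_const
  unfold wd
  exact (h1.sub (contDiffOn_const.mul h2)).div_const 2

lemma wdbar_smooth {d : ℕ} {S : Set (Fin d → ℂ)} (hS : IsOpen S) {f : (Fin d → ℂ) → ℂ}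
    {k : WithTop ℕ∞} (hf : ContDiffOn ℝ (k + 1) f S) (j : Fin d) :
    ContDiffOn ℝ k (wdbar j f) S := by
  have hd : ContDiffOn ℝ k (fderiv ℝ f) S := hf.fderiv_of_isOpen hS le_rfl
  have h1 : ContDiffOn ℝ k (fun z => fderiv ℝ f z (Pi.single j 1)) S :=
    hd.clm_apply contDiffOn_const
  have h2 : ContDiffOn ℝ k (fun z => fderiv ℝ f z (Pi.single j Complex.I)) S :=
    hd.clm_apply contDiffOn_const
  unfold wdbar
  exact (h1.add (contDiffOn_const.mul h2)).div_const 2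

lemma dpair_smooth {d : ℕ} {S : Set (Fin d → ℂ)} (hS : IsOpen S) {f : (Fin d → ℂ) → ℂ}
    {k : WithTop ℕ∞} (hf : ContDiffOn ℝ (k + 1) f S) (t : Fin d → ℂ) :
    ContDiffOn ℝ k (fun z => dpair f z t) S := by
  unfold dpair
  exact ContDiffOn.sum fun j _ => (wd_smooth hS hf j).mul contDiffOn_const

lemma hess_contOn {d : ℕ} {S : Set (Fin d → ℂ)} (hS : IsOpen S) {f : (Fin d → ℂ) → ℂ}
    (hf : ContDiffOn ℝ (⊤ : ℕ∞) f S) (t : Fin d → ℂ) :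
    ContinuousOn (fun z => hessForm f z t) S := by
  have hwb : ∀ k : Fin d, ContDiffOn ℝ ((0:WithTop ℕ∞) + 1) (wdbar k f) S := fun k =>
    wdbar_smooth hS (hf.of_le (by exact WithTop.coe_le_coe.mpr le_top)) k
  have hwd : ∀ j k : Fin d, ContinuousOn (wd j (wdbar k f)) S := fun j k => by
    have := wd_smooth hS (hwb k) j
    exact (contDiffOn_zero.mp this)
  unfold hessForm
  have hsum : ContinuousOn
      (fun z => ∑ j, ∑ k, wd j (fun w => wdbar k f w) z * t j * (starRingEnd ℂ) (t k)) S :=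
    continuousOn_finset_sum _ fun j _ => continuousOn_finset_sum _ fun k _ =>
      ((hwd j k).mul continuousOn_const).mul continuousOn_const
  exact Complex.continuous_re.comp_continuousOn hsum

lemma hessForm_zero {d : ℕ} (f : (Fin d → ℂ) → ℂ) (z : Fin d → ℂ) :
    hessForm f z 0 = 0 := by simp [hessForm]

lemma dpair_zero {d : ℕ} (f : (Fin d → ℂ) → ℂ) (z : Fin d → ℂ) :
    dpair f z 0 = 0 := by simp [dpair]

lemma fderiv_im_eq_zero {d : ℕ} {f : (Fin d → ℂ) → ℂ} (hre : ∀ w, (f w).im = 0)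
    {z : Fin d → ℂ} (hdf : DifferentiableAt ℝ f z) (v : Fin d → ℂ) :
    (fderiv ℝ f z v).im = 0 := by
  have h0 : HasFDerivAt (fun w => (f w).im) (Complex.imCLM.comp (fderiv ℝ f z)) z :=
    Complex.imCLM.hasFDerivAt.comp z hdf.hasFDerivAt
  have h1 : fderiv ℝ (fun w => (f w).im) z = Complex.imCLM.comp (fderiv ℝ f z) := h0.fderiv
  have h2 : (fun w => (f w).im) = fun _ => (0:ℝ) := funext hre
  rw [h2, fderiv_const_apply] at h1
  have h3 : (Complex.imCLM.comp (fderiv ℝ f z)) v = (0 : (Fin d → ℂ) →L[ℝ] ℝ) v := by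
    rw [← h1]
  simpa using h3

lemma fderiv_re_apply {d : ℕ} {f : (Fin d → ℂ) → ℂ}
    {z : Fin d → ℂ} (hdf : DifferentiableAt ℝ f z) (v : Fin d → ℂ) :
    (fderiv ℝ f z v).re = fderiv ℝ (fun w => (f w).re) z v := by
  have h0 : HasFDerivAt (fun w => (f w).re) (Complex.reCLM.comp (fderiv ℝ f z)) z :=
    Complex.reCLM.hasFDerivAt.comp z hdf.hasFDerivAt
  rw [h0.fderiv]; rfl

lemma boundary_nonneg {n : ℕ} {U : Set (Fin n → ℂ)} (hU : IsOpen U) {ρ : (Fin n → ℂ) → ℂ}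
    (hρsm : ContDiffOn ℝ (⊤ : ℕ∞) ρ U) {s : ℝ} (hs1 : s ≤ 1)
    (hρstrict : ∀ z ∈ U, (ρ z).re < 0 → ∀ t : Fin n → ℂ, t ≠ 0 →
      ((1 - s) / (ρ z).re) * ‖dpair ρ z t‖ ^ 2 < hessForm ρ z t)
    {z₁ : Fin n → ℂ} (hz₁ : z₁ ∈ U) (hρgradz : fderiv ℝ ρ z₁ ≠ 0)
    (hρreal : ∀ z, (ρ z).im = 0) (hρ0 : (ρ z₁).re = 0)
    {tz : Fin n → ℂ} (htz : tz ≠ 0) (hdρtz : dpair ρ z₁ tz = 0) :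
    0 ≤ hessForm ρ z₁ tz := by
  have hdiffρ : DifferentiableAt ℝ ρ z₁ :=
    (hρsm.contDiffAt (hU.mem_nhds hz₁)).differentiableAt (by simp)
  have him : ∀ v, (fderiv ℝ ρ z₁ v).im = 0 := fun v => fderiv_im_eq_zero hρreal hdiffρ v
  obtain ⟨v0, hv0⟩ : ∃ v, fderiv ℝ ρ z₁ v ≠ 0 := by
    by_contra hcon
    push_neg at hcon
    exact hρgradz (by ext v; simpa using hcon v)
  have ha0 : (fderiv ℝ ρ z₁ v0).re ≠ 0 := fun hh =>
    hv0 (Complex.ext (by simpa using hh) (by simpa using him v0))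
  obtain ⟨v, a, ha, hfa⟩ : ∃ v a, 0 < a ∧ (fderiv ℝ ρ z₁ v).re = -a := by
    rcases ha0.lt_or_gt with hlt | hgt
    · exact ⟨v0, -(fderiv ℝ ρ z₁ v0).re, by linarith, by ring⟩
    · refine ⟨-v0, (fderiv ℝ ρ z₁ v0).re, hgt, ?_⟩
      rw [map_neg, Complex.neg_re]
  set z : ℝ → (Fin n → ℂ) := fun δ => z₁ + δ • v with hzdef
  have hz0 : z 0 = z₁ := by simp [hzdef]
  have hzpath : Tendsto z (𝓝[>] (0:ℝ)) (𝓝 z₁) := by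
    have hc : Continuous z := continuous_const.add (continuous_id.smul continuous_const)
    exact (hc.tendsto' 0 z₁ hz0).mono_left nhdsWithin_le_nhds
  have hevU : ∀ᶠ δ in 𝓝[>] (0:ℝ), z δ ∈ U := hzpath (hU.mem_nhds hz₁)
  have hpathd : HasDerivAt z v 0 := by
    have h1 : HasDerivAt (fun δ : ℝ => δ • v) ((1:ℝ) • v) 0 := (hasDerivAt_id 0).smul_const v
    have h2 := h1.const_add z₁
    simpa [hzdef] using h2
  have hF : HasFDerivAt ρ (fderiv ℝ ρ z₁) (z 0) := by rw [hz0]; exact hdiffρ.hasFDerivAt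
  have hρz : HasDerivAt (fun δ => ρ (z δ)) (fderiv ℝ ρ z₁ v) 0 := hF.comp_hasDerivAt 0 hpathd
  have hφ : HasDerivAt (fun δ => (ρ (z δ)).re) (-a) 0 := by
    have h2 : HasDerivAt (fun δ => (ρ (z δ)).re) (Complex.reCLM (fderiv ℝ ρ z₁ v)) 0 :=
      Complex.reCLM.hasFDerivAt.comp_hasDerivAt 0 hρz
    rw [Complex.reCLM_apply, hfa] at h2
    exact h2
  have hsl : Tendsto (slope (fun δ => (ρ (z δ)).re) 0) (𝓝[>] (0:ℝ)) (𝓝 (-a)) :=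
    (hasDerivAt_iff_tendsto_slope.mp hφ).mono_left
      (nhdsWithin_mono _ (fun x hx => ne_of_gt hx))
  have hev1 : ∀ᶠ δ in 𝓝[>] (0:ℝ), slope (fun δ => (ρ (z δ)).re) 0 δ < -(a/2) :=
    hsl.eventually_lt_const (by linarith)
  have hevρ : ∀ᶠ δ in 𝓝[>] (0:ℝ), (ρ (z δ)).re < -(a/2)*δ := by
    filter_upwards [hev1, self_mem_nhdsWithin] with δ hsld hδ
    rw [slope_def_field] at hsld
    have hf0 : (ρ (z 0)).re = 0 := by rw [hz0]; exact hρ0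
    rw [hf0, sub_zero, sub_zero] at hsld
    exact (div_lt_iff₀ hδ).mp hsld
  set g : ℝ → ℂ := fun δ => dpair ρ (z δ) tz with hgdef
  have hgd : DifferentiableAt ℝ g 0 := by
    have hdp : ContDiffOn ℝ 1 (fun z => dpair ρ z tz) U :=
      dpair_smooth hU (hρsm.of_le (by exact WithTop.coe_le_coe.mpr le_top)) tz
    have h1 : DifferentiableAt ℝ (fun z => dpair ρ z tz) (z 0) := by
      rw [hz0]
      exact (hdp.contDiffAt (hU.mem_nhds hz₁)).differentiableAt one_ne_zero
    exact h1.comp 0 hpathd.differentiableAt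
  have hg0 : g 0 = 0 := by
    show dpair ρ (z 0) tz = 0
    rw [hz0, hdρtz]
  have hslg : Tendsto (fun δ => ‖slope g 0 δ‖) (𝓝[>] (0:ℝ)) (𝓝 ‖deriv g 0‖) :=
    ((hasDerivAt_iff_tendsto_slope.mp hgd.hasDerivAt).mono_left
      (nhdsWithin_mono _ (fun x hx => ne_of_gt hx))).norm
  set C : ℝ := ‖deriv g 0‖ + 1 with hCdef
  have hC : 0 < C := by positivity
  have hev4 : ∀ᶠ δ in 𝓝[>] (0:ℝ), ‖slope g 0 δ‖ < C :=
    hslg.eventually_lt_const (by simp [hCdef])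
  have hevg : ∀ᶠ δ in 𝓝[>] (0:ℝ), ‖g δ‖ ≤ C * δ := by
    filter_upwards [hev4, self_mem_nhdsWithin] with δ h4 hδ
    have hse : slope g 0 δ = δ⁻¹ • g δ := by
      rw [slope_def_module, hg0, sub_zero, sub_zero]
    rw [hse, norm_smul, Real.norm_eq_abs, abs_inv, abs_of_pos hδ] at h4
    have h4' := mul_le_mul_of_nonneg_left h4.le (le_of_lt hδ)
    rw [← mul_assoc, mul_inv_cancel₀ (ne_of_gt hδ), one_mul] at h4'
    rw [mul_comm C δ]
    exact h4'
  have hevT : ∀ᶠ δ in 𝓝[>] (0:ℝ),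
      ((1-s)/(ρ (z δ)).re) * ‖g δ‖^2 ≤ hessForm ρ (z δ) tz := by
    filter_upwards [hevU, hevρ, self_mem_nhdsWithin] with δ hδU hδρ hδ
    have hδ0 : (0:ℝ) < δ := hδ
    have hneg : (ρ (z δ)).re < 0 := by nlinarith [mul_pos ha hδ0]
    exact (hρstrict _ hδU hneg tz htz).le
  set K : ℝ := 2*(1-s)*C^2/a with hKdef
  have hK : 0 ≤ K := by
    apply div_nonneg _ ha.le
    nlinarith
  have hKa : K * a = 2*(1-s)*C^2 := div_mul_cancel₀ _ (ne_of_gt ha)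
  have hnegT : Tendsto (fun δ => -(((1-s)/(ρ (z δ)).re) * ‖g δ‖^2))
      (𝓝[>] (0:ℝ)) (𝓝 0) := by
    apply squeeze_zero'
    · filter_upwards [hevρ, self_mem_nhdsWithin] with δ hδρ hδ
      have hδ0 : (0:ℝ) < δ := hδ
      have hneg : (ρ (z δ)).re < 0 := by nlinarith [mul_pos ha hδ0]
      have h5 : (1-s)/(ρ (z δ)).re ≤ 0 :=
        div_nonpos_of_nonneg_of_nonpos (by linarith) hneg.le
      nlinarith [sq_nonneg ‖g δ‖]
    · show ∀ᶠ δ in 𝓝[>] (0:ℝ), _ ≤ K * δ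
      filter_upwards [hevρ, hevg, self_mem_nhdsWithin] with δ hδρ hδg hδ
      have hδ0 : (0:ℝ) < δ := hδ
      have hneg : (ρ (z δ)).re < 0 := by nlinarith [mul_pos ha hδ0]
      have habs : ‖g δ‖ = ‖g δ‖ := rfl
      have hq : ‖g δ‖^2 ≤ C^2 * δ^2 := by
        rw [habs]; nlinarith [norm_nonneg (g δ)]
      have hrne : (ρ (z δ)).re ≠ 0 := ne_of_lt hneg
      have heq : -((1-s)/(ρ (z δ)).re * ‖g δ‖^2)
          = ((1-s) * ‖g δ‖^2) / (-(ρ (z δ)).re) := by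
        rw [div_mul_eq_mul_div, div_neg]
      rw [heq, div_le_iff₀ (by linarith : (0:ℝ) < -(ρ (z δ)).re)]
      have h6 : (1-s) * ‖g δ‖^2 ≤ (1-s) * (C^2*δ^2) :=
        mul_le_mul_of_nonneg_left hq (by linarith)
      have h7 : 0 ≤ K*δ*(-(ρ (z δ)).re - (a/2)*δ) :=
        mul_nonneg (mul_nonneg hK hδ.le) (by linarith)
      nlinarith [h6, h7, hKa]
    · have hKt : Tendsto (fun δ : ℝ => K * δ) (𝓝 (0:ℝ)) (𝓝 0) := by
        have hc : Continuous (fun δ : ℝ => K * δ) := continuous_const.mul continuous_id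
        have := hc.tendsto (0:ℝ)
        simpa using this
      exact hKt.mono_left nhdsWithin_le_nhds
  have hT0 : Tendsto (fun δ => ((1-s)/(ρ (z δ)).re) * ‖g δ‖^2)
      (𝓝[>] (0:ℝ)) (𝓝 0) := by
    have := hnegT.neg
    simpa using this
  have hcontρ : Tendsto (fun δ => hessForm ρ (z δ) tz) (𝓝[>] (0:ℝ))
      (𝓝 (hessForm ρ z₁ tz)) :=
    ((hess_contOn hU hρsm tz).continuousAt (hU.mem_nhds hz₁)).tendsto.comp hzpath
  exact le_of_tendsto_of_tendsto hT0 hcontρ hevT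


/-- local pseudoconvexity of the Hartogs-type hypersurface
∂G̃ = {ρ(z)+h(w)=0}: nonnegativity of the Levi form of r = ρ + h on the complex tangent
space at every boundary point, and positive definiteness when w¹ ≠ 0 and h is strictly
plurisubharmonic at w¹. -/
theorem stmt6 (n m : ℕ)
    (U : Set (Fin n → ℂ)) (hU : IsOpen U)
    (V : Set (Fin m → ℂ)) (hV : IsOpen V) (h0V : (0 : Fin m → ℂ) ∈ V)
    (ρ : (Fin n → ℂ) → ℂ) (h : (Fin m → ℂ) → ℂ)
    (hρsm : ContDiffOn ℝ (⊤ : ℕ∞) ρ U) (hhsm : ContDiffOn ℝ (⊤ : ℕ∞) h V)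
    (hρreal : ∀ z, (ρ z).im = 0) (hhreal : ∀ w, (h w).im = 0)
    (hρgrad : ∀ z ∈ U, fderiv ℝ ρ z ≠ 0)
    (hhnonneg : ∀ w ∈ V, 0 ≤ (h w).re)
    (hhzero : ∀ w ∈ V, (h w = 0 ↔ w = 0))
    (hhgrad : ∀ w ∈ V, w ≠ 0 → fderiv ℝ h w ≠ 0)
    (s s' : ℝ) (hs0 : 0 < s) (hs1 : s ≤ 1) (hs'0 : 0 ≤ s') (hs's : s' < s)
    -- −(−ρ)^s strictly plurisubharmonic on {ρ < 0} ∩ U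
    (hρstrict : ∀ z ∈ U, (ρ z).re < 0 → ∀ t : Fin n → ℂ, t ≠ 0 →
      ((1 - s) / (ρ z).re) * ‖dpair ρ z t‖ ^ 2 < hessForm ρ z t)
    -- h^{s'} plurisubharmonic on V
    (hhpsh : ∀ w ∈ V, 0 < (h w).re → ∀ t : Fin m → ℂ,
      ((1 - s') / (h w).re) * ‖dpair h w t‖ ^ 2 ≤ hessForm h w t) :
    ∀ z₁ ∈ U, ∀ w₁ ∈ V, (ρ z₁).re + (h w₁).re = 0 →
      (∀ tz : Fin n → ℂ, ∀ tw : Fin m → ℂ,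
          dpair ρ z₁ tz + dpair h w₁ tw = 0 →
          0 ≤ hessForm ρ z₁ tz + hessForm h w₁ tw) ∧
      (w₁ ≠ 0 → (∀ tw : Fin m → ℂ, tw ≠ 0 → 0 < hessForm h w₁ tw) →
        ∀ tz : Fin n → ℂ, ∀ tw : Fin m → ℂ,
          dpair ρ z₁ tz + dpair h w₁ tw = 0 → ¬(tz = 0 ∧ tw = 0) →
          0 < hessForm ρ z₁ tz + hessForm h w₁ tw) := by
  intro z₁ hz₁ w₁ hw₁ hsum
  -- h is positive on V \ {0}
  have hpos : ∀ w ∈ V, w ≠ 0 → 0 < (h w).re := by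
    intro w hw hwne
    rcases lt_or_eq_of_le (hhnonneg w hw) with hlt | heq
    · exact hlt
    · exfalso
      exact hwne ((hhzero w hw).mp (Complex.ext heq.symm (hhreal w)))
  -- the key strict estimate when h(w₁) > 0 and tz ≠ 0
  have key : ∀ tz : Fin n → ℂ, ∀ tw : Fin m → ℂ, 0 < (h w₁).re →
      dpair ρ z₁ tz + dpair h w₁ tw = 0 → tz ≠ 0 →
      0 < hessForm ρ z₁ tz + hessForm h w₁ tw := by
    intro tz tw hH htan htz
    have hρneg : (ρ z₁).re < 0 := by linarith
    have hceq : ‖dpair h w₁ tw‖ = ‖dpair ρ z₁ tz‖ := by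
      have hdp : dpair h w₁ tw = -dpair ρ z₁ tz := by linear_combination htan
      rw [hdp, norm_neg]
    set c : ℝ := ‖dpair ρ z₁ tz‖ with hc
    have h1 := hρstrict z₁ hz₁ hρneg tz htz
    have h2 := hhpsh w₁ hw₁ hH tw
    rw [hceq] at h2
    have hr : (ρ z₁).re = -(h w₁).re := by linarith
    rw [hr, div_neg] at h1
    have hc2 : (0:ℝ) ≤ c ^ 2 := sq_nonneg c
    have e2 : ((1:ℝ)-s')/(h w₁).re * c^2 - (1-s)/(h w₁).re * c^2 = ((s-s')/(h w₁).re)*c^2 := by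
      ring
    have e3 : 0 ≤ ((s-s')/(h w₁).re)*c^2 :=
      mul_nonneg (div_nonneg (by linarith) hH.le) hc2
    nlinarith [h1, h2]
  constructor
  · -- nonnegativity
    intro tz tw htan
    by_cases hH : 0 < (h w₁).re
    · by_cases htz : tz = 0
      · subst htz
        rw [hessForm_zero]
        rw [dpair_zero, zero_add] at htan
        have h2 := hhpsh w₁ hw₁ hH tw
        rw [htan] at h2
        simp at h2
        linarith
      · exact (key tz tw hH htan htz).le
    · -- boundary case h(w₁) = 0, w₁ = 0, ρ(z₁) = 0
      have hHre : (h w₁).re = 0 := le_antisymm (not_lt.mp hH) (hhnonneg w₁ hw₁)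
      have hw₁0 : w₁ = 0 := (hhzero w₁ hw₁).mp (Complex.ext hHre (hhreal w₁))
      subst hw₁0
      have hρ0 : (ρ z₁).re = 0 := by linarith
      -- fderiv h 0 = 0
      have hdiffh : DifferentiableAt ℝ h 0 :=
        (hhsm.contDiffAt (hV.mem_nhds hw₁)).differentiableAt (by simp)
      have hmin : IsLocalMin (fun w => (h w).re) 0 := by
        filter_upwards [hV.mem_nhds hw₁] with w hw
        have h00 : h 0 = 0 := (hhzero 0 hw₁).mpr rfl
        simp only [h00]
        simpa using hhnonneg w hw
      have hfh : fderiv ℝ h 0 = 0 := by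
        ext v
        apply Complex.ext
        · rw [fderiv_re_apply hdiffh v, hmin.fderiv_eq_zero]
          simp
        · rw [fderiv_im_eq_zero hhreal hdiffh v]
          simp
      have hdph : dpair h 0 tw = 0 := by
        unfold dpair wd
        simp [hfh]
      have hdρtz : dpair ρ z₁ tz = 0 := by
        rw [hdph, add_zero] at htan
        exact htan
      -- part (a): 0 ≤ hessForm h 0 tw
      have ha : 0 ≤ hessForm h 0 tw := by
        by_cases htw : tw = 0
        · subst htw; rw [hessForm_zero]
        · have hpath : Filter.Tendsto (fun δ : ℝ => δ • tw) (nhdsWithin 0 (Set.Ioi 0)) (𝓝 0) := by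
            have hc : Continuous (fun δ : ℝ => δ • tw) := continuous_id.smul continuous_const
            have := hc.tendsto' 0 0 (by simp)
            exact this.mono_left nhdsWithin_le_nhds
          have hevV : ∀ᶠ δ in nhdsWithin (0:ℝ) (Set.Ioi 0), δ • tw ∈ V :=
            hpath (hV.mem_nhds h0V)
          have hev2 : ∀ᶠ δ in nhdsWithin (0:ℝ) (Set.Ioi 0), 0 ≤ hessForm h (δ • tw) tw := by
            filter_upwards [hevV, self_mem_nhdsWithin] with δ hδV hδpos
            have hδne : δ • tw ≠ 0 := smul_ne_zero (ne_of_gt hδpos) htw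
            have hpδ := hpos _ hδV hδne
            refine le_trans ?_ (hhpsh _ hδV hpδ tw)
            have : (0:ℝ) ≤ (1 - s') / (h (δ • tw)).re := div_nonneg (by linarith) hpδ.le
            positivity
          have hcont : Filter.Tendsto (fun δ : ℝ => hessForm h (δ • tw) tw)
              (nhdsWithin 0 (Set.Ioi 0)) (𝓝 (hessForm h 0 tw)) := by
            have hca : ContinuousAt (fun w => hessForm h w tw) 0 :=
              (hess_contOn hV hhsm tw).continuousAt (hV.mem_nhds h0V)
            exact hca.tendsto.comp hpath
          exact ge_of_tendsto hcont hev2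
      -- part (b): 0 ≤ hessForm ρ z₁ tz
      have hb : 0 ≤ hessForm ρ z₁ tz := by
        by_cases htz : tz = 0
        · subst htz; rw [hessForm_zero]
        · exact boundary_nonneg hU hρsm hs1 hρstrict hz₁ (hρgrad z₁ hz₁) hρreal hρ0 htz hdρtz
      linarith
  · -- strict positivity
    intro hw₁ne hstrict tz tw htan htznz
    have hH : 0 < (h w₁).re := hpos w₁ hw₁ hw₁ne
    by_cases htz : tz = 0
    · have htw : tw ≠ 0 := fun hh => htznz ⟨htz, hh⟩
      subst htz
      rw [hessForm_zero, zero_add]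
      exact hstrict tw htw
    · exact key tz tw hH htan htz
end

section
/- Let ρ be smooth defining data. Then the domain Ω̃ = {(z,w) ∈ ℂ^n × ℂ : ρ(z)+|w|² < 0} is (Levi) pseudoconvex at a boundary point (z¹,w¹) with w¹ ≠ 0 if and only if i∂∂̄ρ(z¹) ≥ (1/ρ(z¹)) i(∂ρ∧∂̄ρ)(z¹) on all of ℂ^n. -/
/-- for h(w) = |w|² (m = 1), the domain {ρ(z)+|w|² < 0} is Levi
pseudoconvex at a boundary point (z¹,w¹) with w¹ ≠ 0 iff
i∂∂̄ρ(z¹) ≥ (1/ρ(z¹)) i(∂ρ∧∂̄ρ)(z¹) on all of ℂⁿ.  (The Levi form of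
r = ρ + |w|² at (z¹,w¹) evaluated at (t_z,t_w) is hessForm ρ z¹ t_z + |t_w|², and the
complex tangent space is {(t_z,t_w) : ⟨∂ρ(z¹),t_z⟩ + w̄¹ t_w = 0}.) -/
theorem stmt7 (n : ℕ) (U : Set (Fin n → ℂ)) (hU : IsOpen U)
    (ρ : (Fin n → ℂ) → ℂ)
    (hreal : ∀ z, (ρ z).im = 0)
    (hsm : ContDiffOn ℝ (⊤ : ℕ∞) ρ U)
    (z₁ : Fin n → ℂ) (hz₁ : z₁ ∈ U)
    (w₁ : ℂ) (hw₁ : w₁ ≠ 0)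
    (hbd : (ρ z₁).re + Complex.normSq w₁ = 0) :
    (∀ tz : Fin n → ℂ, ∀ tw : ℂ,
        dpair ρ z₁ tz + (starRingEnd ℂ) w₁ * tw = 0 →
        0 ≤ hessForm ρ z₁ tz + Complex.normSq tw)
      ↔ (∀ tz : Fin n → ℂ,
        (1 / (ρ z₁).re) * (‖dpair ρ z₁ tz‖) ^ 2 ≤ hessForm ρ z₁ tz) := by
  have hc : 0 < Complex.normSq w₁ := Complex.normSq_pos.mpr hw₁
  have hρ : (ρ z₁).re = -Complex.normSq w₁ := by linarith
  have hcw : (starRingEnd ℂ) w₁ ≠ 0 := by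
    simpa using hw₁
  constructor
  · intro H tz
    set p := dpair ρ z₁ tz with hp
    have htan : p + (starRingEnd ℂ) w₁ * (-p / (starRingEnd ℂ) w₁) = 0 := by
      field_simp
      ring
    have h0 := H tz (-p / (starRingEnd ℂ) w₁) htan
    have hns : Complex.normSq (-p / (starRingEnd ℂ) w₁)
        = Complex.normSq p / Complex.normSq w₁ := by
      rw [Complex.normSq_div, Complex.normSq_neg, Complex.normSq_conj]
    rw [hns] at h0
    rw [hρ, Complex.sq_norm]
    have h0' : 0 ≤ hessForm ρ z₁ tz * Complex.normSq w₁ + Complex.normSq p := by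
      have := mul_le_mul_of_nonneg_right h0 hc.le
      simpa [add_mul, div_mul_cancel₀ _ hc.ne'] using this
    rw [div_mul_eq_mul_div, one_mul, div_le_iff_of_neg (by linarith : -Complex.normSq w₁ < 0)]
    linarith
  · intro H tz tw htan
    set p := dpair ρ z₁ tz with hp
    have h1 := H tz
    rw [hρ, Complex.sq_norm, div_mul_eq_mul_div, one_mul,
      div_le_iff_of_neg (by linarith : -Complex.normSq w₁ < 0)] at h1
    have htw : (starRingEnd ℂ) w₁ * tw = -p := by linear_combination htan
    have hns : Complex.normSq w₁ * Complex.normSq tw = Complex.normSq p := by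
      rw [← Complex.normSq_conj w₁, ← Complex.normSq_mul, htw, Complex.normSq_neg]
    nlinarith [Complex.normSq_nonneg p, Complex.normSq_nonneg tw]
end

section
/- Neumann series perturbation of weighted Bergman projections: let ω be an admissible weight on a bounded domain Ω ⊂ ℂ^n and h a real bounded measurable function with 0 < c ≤ |h| ≤ C < 1. Then (1+h)ω is an admissible weight and the weighted Bergman projection satisfies P_{(1+h)ω} = P_ω + ∑_{k=1}^∞ (−1)^{k−1} (P_ω ∘ M_h)^k ∘ (Id − P_ω), with the series converging in operator norm on L²(ω dλ), where M_h is multiplication by h. -/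
/-!
Write `R = P T` and `Q = P + S` with `S = ∑_{k ≥ 0} (-R)^k R (1 - P)`. Since `‖R‖ ≤ ‖T‖ < 1` the
Neumann series converges and `(1 + R) S = R (1 - P)`. From this identity and `P² = P` alone one
gets `Q = P (1 + T (1 - P) - T S)`, so `Q` takes values in `A`, and `P (1 + T) (1 - Q) = 0`, which
says that `(1 + T)(f - Q f)` is orthogonal to `A`.
-/

section PerturbedProjection

variable {R : Type*} [Ring R] {p t s : R}

theorem add_eq_mul_of_one_add_mul_mul_eq (hs : (1 + p * t) * s = p * t * (1 - p)) :
    p + s = p * (1 + t * (1 - p) - t * s) := by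
  have hs' : p * t * (1 - p) = s + p * t * s := by
    rw [← hs]
    noncomm_ring
  rw [mul_sub, mul_add, ← mul_assoc, hs']
  noncomm_ring

theorem IsIdempotentElem.mul_one_add_mul_one_sub_add_eq_zero (hp : IsIdempotentElem p)
    (hs : (1 + p * t) * s = p * t * (1 - p)) : p * (1 + t) * (1 - (p + s)) = 0 := by
  have hps : p * s = s := by
    have hs_eq : s = p * (1 + t * (1 - p) - t * s) - p :=
      eq_sub_of_add_eq' (add_eq_mul_of_one_add_mul_mul_eq hs)
    conv_lhs => rw [hs_eq]
    rw [mul_sub, ← mul_assoc, hp.eq, ← hs_eq]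
  have hpts : p * t * s = p * t * (1 - p) - s := by
    rw [eq_sub_iff_add_eq, ← hs]
    noncomm_ring
  calc p * (1 + t) * (1 - (p + s)) = p - p * p + p * t - p * t * p - p * s - p * t * s := by
        noncomm_ring
    _ = 0 := by
        rw [hp.eq, hps, hpts]
        noncomm_ring

end PerturbedProjection

theorem one_add_mul_tsum_neg_pow_mul {R : Type*} [NormedRing R] [HasSummableGeomSeries R]
    {r : R} (hr : ‖r‖ < 1) (b : R) : (1 + r) * ∑' k, (-r) ^ k * b = b := by
  have hnr : ‖-r‖ < 1 := by rwa [norm_neg]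
  rw [(summable_geometric_of_norm_lt_one hnr).tsum_mul_right, ← mul_assoc, ← sub_neg_eq_add,
    mul_neg_geom_series _ hnr, one_mul]

theorem re_inner_add_apply_self_pos {𝕜 E : Type*} [RCLike 𝕜] [NormedAddCommGroup E]
    [InnerProductSpace 𝕜 E] {T : E →L[𝕜] E} (hT : ‖T‖ < 1) {x : E} (hx : x ≠ 0) :
    0 < RCLike.re (inner 𝕜 (x + T x) x) := by
  have hTx : -(‖T‖ * ‖x‖ ^ 2) ≤ RCLike.re (inner 𝕜 (T x) x) := by
    have := re_inner_le_norm (𝕜 := 𝕜) (-T x) x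
    rw [inner_neg_left, map_neg, norm_neg] at this
    nlinarith [T.le_opNorm x, norm_nonneg x]
  have hx2 : 0 < ‖x‖ ^ 2 := by positivity
  rw [inner_add_left, map_add, inner_self_eq_norm_sq]
  nlinarith

theorem neg_one_pow_smul_pow_succ_mul {𝕜 R : Type*} [CommRing 𝕜] [Ring R] [Algebra 𝕜 R]
    (r b : R) (k : ℕ) : ((-1 : 𝕜) ^ k) • (r ^ (k + 1) * b) = (-r) ^ k * (r * b) := by
  rw [Algebra.smul_def, map_pow, map_neg, map_one, neg_pow r, pow_succ]
  simp only [mul_assoc]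

theorem stmt15_general {H : Type*} [NormedAddCommGroup H] [InnerProductSpace ℂ H]
    [CompleteSpace H]
    (A : Submodule ℂ H) [A.HasOrthogonalProjection]
    (T : H →L[ℂ] H)
    (C : ℝ) (hC : C < 1)
    (hTC : ‖T‖ ≤ C)
    (P : H →L[ℂ] H) (hP : P = A.subtypeL.comp A.orthogonalProjectionOnto)
    (F : ℕ → (H →L[ℂ] H))
    (hF : ∀ k : ℕ, F k = ((-1 : ℂ) ^ k) •
      (((P.comp T) ^ (k + 1)).comp (ContinuousLinearMap.id ℂ H - P))) :
    (∀ x : H, x ≠ 0 → 0 < (inner ℂ (x + T x) x : ℂ).re) ∧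
    Summable F ∧
    (∀ f : H, (P + ∑' k, F k) f ∈ A) ∧
    (∀ f : H, ∀ a ∈ A,
      (inner ℂ ((f - (P + ∑' k, F k) f) + T (f - (P + ∑' k, F k) f)) a : ℂ) = 0) := by
  have hT : ‖T‖ < 1 := hTC.trans_lt hC
  replace hP : P = A.starProjection := hP
  subst hP
  have hR : ‖A.starProjection * T‖ < 1 :=
    calc ‖A.starProjection * T‖ ≤ ‖A.starProjection‖ * ‖T‖ := norm_mul_le _ _
      _ ≤ 1 * ‖T‖ := by gcongr; exact A.starProjection_norm_le
      _ < 1 := by rwa [one_mul]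
  have hF' : F = fun k ↦ (-(A.starProjection * T)) ^ k *
      (A.starProjection * T * (1 - A.starProjection)) :=
    funext fun k ↦ (hF k).trans (neg_one_pow_smul_pow_succ_mul _ _ k)
  have hs : (1 + A.starProjection * T) * ∑' k, F k =
      A.starProjection * T * (1 - A.starProjection) :=
    hF' ▸ one_add_mul_tsum_neg_pow_mul hR _
  refine ⟨fun x hx ↦ re_inner_add_apply_self_pos hT hx, ?_, fun f ↦ ?_, fun f a ha ↦ ?_⟩
  · rw [hF']
    have hnR : ‖-(A.starProjection * T)‖ < 1 := by rwa [norm_neg]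
    exact (summable_geometric_of_norm_lt_one hnR).mul_right _
  · rw [add_eq_mul_of_one_add_mul_mul_eq hs]
    exact A.starProjection_apply_mem _
  · have h := congr($(A.isIdempotentElem_starProjection.mul_one_add_mul_one_sub_add_eq_zero hs) f)
    exact Submodule.inner_left_of_mem_orthogonal ha (A.starProjection_apply_eq_zero_iff.1 h)

/-- Neumann series perturbation of weighted Bergman projections
(abstract Hilbert-space form).  H plays the role of L²(ω dλ), A of the closed subspace
A²(Ω, ω dλ) of holomorphic functions, P = P_ω the orthogonal projection onto A, and T
the (self-adjoint) multiplication operator M_h by a real function h with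
0 < c ≤ |h| ≤ C < 1.  Then the modified inner product ⟪(1+T)·,·⟫ (corresponding to the
admissible weight (1+h)ω) is positive definite, the series
∑_{k≥1} (−1)^{k−1}(P∘T)^k∘(Id−P) converges in operator norm, and
Q = P + ∑_{k≥1} (−1)^{k−1}(P∘T)^k∘(Id−P) is the Bergman projection P_{(1+h)ω}:
it takes values in A and f − Q f is ⟪(1+T)·,·⟫-orthogonal to A for every f. -/
theorem stmt15 {H : Type*} [NormedAddCommGroup H] [InnerProductSpace ℂ H]
    [CompleteSpace H]
    (A : Submodule ℂ H) (hA : IsClosed (A : Set H)) [A.HasOrthogonalProjection]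
    (T : H →L[ℂ] H) (hT : IsSelfAdjoint T)
    (c C : ℝ) (hc : 0 < c) (hC : C < 1)
    (hTc : ∀ x : H, c * ‖x‖ ≤ ‖T x‖) (hTC : ‖T‖ ≤ C)
    (P : H →L[ℂ] H) (hP : P = A.subtypeL.comp A.orthogonalProjectionOnto)
    (F : ℕ → (H →L[ℂ] H))
    (hF : ∀ k : ℕ, F k = ((-1 : ℂ) ^ k) •
      (((P.comp T) ^ (k + 1)).comp (ContinuousLinearMap.id ℂ H - P))) :
    (∀ x : H, x ≠ 0 → 0 < (inner ℂ (x + T x) x : ℂ).re) ∧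
    Summable F ∧
    (∀ f : H, (P + ∑' k, F k) f ∈ A) ∧
    (∀ f : H, ∀ a ∈ A,
      (inner ℂ ((f - (P + ∑' k, F k) f) + T (f - (P + ∑' k, F k) f)) a : ℂ) = 0) :=
  stmt15_general A T C hC hTC P hP F hF
end

section
/- Stability of L^p boundedness under small perturbation of the weight: in the setting of the Neumann series identity, if P_ω maps L^p(δ_{∂Ω}^β dλ) boundedly into itself with norm K, and ‖h‖_∞ ≤ 1/(K+1)², then P_{(1+h)ω} also maps L^p(δ_{∂Ω}^β dλ) boundedly into itself. -/
/-- stability of L^p(δ_{∂Ω}^β) boundedness under small perturbation of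
the weight (abstract operator form).  E plays the role of L^p(δ_{∂Ω}^β dλ), P of the
restriction of P_ω (bounded on E with norm ≤ K), and T of multiplication by h with
‖T‖ ≤ ‖h‖_∞ ≤ 1/(K+1)².  Then the Neumann series defining P_{(1+h)ω} converges in
operator norm on E, so P_{(1+h)ω} = P + ∑_{k≥1}(−1)^{k−1}(P∘T)^k∘(Id−P) is a bounded
operator on E. -/
theorem stmt16 {E : Type*} [NormedAddCommGroup E] [NormedSpace ℂ E] [CompleteSpace E]
    (P T : E →L[ℂ] E) (K ε : ℝ) (hK : 0 ≤ K) (hε : 0 ≤ ε)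
    (hP : ‖P‖ ≤ K) (hT : ‖T‖ ≤ ε) (hsmall : ε ≤ 1 / (K + 1) ^ 2) :
    Summable (fun k : ℕ => ((-1 : ℂ) ^ k) •
      (((P.comp T) ^ (k + 1)).comp (ContinuousLinearMap.id ℂ E - P))) ∧
    ∃ C : ℝ, ‖P + ∑' k : ℕ, ((-1 : ℂ) ^ k) •
      (((P.comp T) ^ (k + 1)).comp (ContinuousLinearMap.id ℂ E - P))‖ ≤ C := by
  set r : ℝ := ‖P.comp T‖ with hr
  have hr0 : 0 ≤ r := norm_nonneg _
  have hrK : r ≤ K * ε := le_trans (P.opNorm_comp_le T) (mul_le_mul hP hT (norm_nonneg _) hK)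
  have hr1 : r < 1 := by
    have h1 : (0:ℝ) < (K + 1) ^ 2 := by positivity
    have : K * ε ≤ K * (1 / (K + 1) ^ 2) := by
      exact mul_le_mul_of_nonneg_left hsmall hK
    have h2 : K * (1 / (K + 1) ^ 2) < 1 := by
      rw [mul_one_div, div_lt_one h1]; nlinarith
    linarith
  set c : ℝ := ‖ContinuousLinearMap.id ℂ E - P‖ with hc
  have hsum : Summable (fun k : ℕ => ((-1 : ℂ) ^ k) •
      (((P.comp T) ^ (k + 1)).comp (ContinuousLinearMap.id ℂ E - P))) := by
    apply Summable.of_norm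
    have hgeo : Summable (fun k : ℕ => r ^ k * (r * c)) :=
      (summable_geometric_of_lt_one hr0 hr1).mul_right _
    apply Summable.of_nonneg_of_le (fun k => norm_nonneg _) _ hgeo
    intro k
    have hns := norm_smul ((-1 : ℂ) ^ k) (((P.comp T) ^ (k + 1)).comp (ContinuousLinearMap.id ℂ E - P))
    rw [hns, norm_pow, norm_neg, norm_one, one_pow, one_mul]
    calc ‖((P.comp T) ^ (k + 1)).comp (ContinuousLinearMap.id ℂ E - P)‖
        ≤ ‖(P.comp T) ^ (k + 1)‖ * c := ContinuousLinearMap.opNorm_comp_le _ _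
      _ ≤ r ^ (k + 1) * c := by
          exact mul_le_mul_of_nonneg_right (norm_pow_le' _ (Nat.succ_pos k)) (norm_nonneg _)
      _ = r ^ k * (r * c) := by ring
  exact ⟨hsum, ⟨_, le_refl _⟩⟩
end

section
/- Boundary distance comparison forcing the minimizer onto the slice: let Ω ⊂ ℂ^n be bounded convex of finite type τ with defining function ρ, let h : ℂ^m → ℝ₊ satisfy h(w) ≍ ∑|w_i|^{2q_i} with each q_i > τ, and let H̃_δ = {(z,w) : ρ(z)+h(w) = δ}. Fix P₀ ∈ ∂Ω and let P̃₁ = (Q₁, w) ∈ H̃_δ realize the Euclidean distance from (P₀,0) to H̃_δ. Then for all sufficiently small δ > 0 (depending only on Ω, h) one has w = 0, i.e., ρ(Q₁) = δ and the closest point lies in ℂ^n × {0}. -/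
/-!
Comparing the minimizer `(Q₁, w)` with the competitor `(Z, 0)`, where `ρ Z = δ` and `Z` is found
within `C δ^{1/τ}` of `P₀`, makes `‖w‖` small. If `w ≠ 0`, the finite-type estimate gives a
competitor `(Q₂, 0)` with `‖Q₂ - Q₁‖ ≤ C h(w)^{1/τ}`, so minimality forces
`‖w‖² ≲ h(w)^{1/τ} ≲ ‖w‖^{s/τ}`, where `s > 2τ` is an integer below every exponent `2qᵢ`;
this is impossible for small `‖w‖ > 0`.
-/

open Filter Topology

section ModelFunction

variable {𝕜 ι : Type*} [RCLike 𝕜] [Fintype ι]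

lemma sum_norm_pow_pos {w : EuclideanSpace 𝕜 ι} (hw : w ≠ 0) (k : ι → ℕ) :
    0 < ∑ i, ‖w i‖ ^ k i := by
  obtain ⟨i, hi⟩ : ∃ i, w i ≠ 0 := by
    by_contra! hcon
    exact hw (PiLp.ext hcon)
  exact Finset.sum_pos' (fun j _ => by positivity)
    ⟨i, Finset.mem_univ i, pow_pos (norm_pos_iff.mpr hi) _⟩

lemma sum_norm_pow_le_card_mul {w : EuclideanSpace 𝕜 ι} (hw : ‖w‖ ≤ 1) {k : ι → ℕ} {s : ℕ}
    (hs : ∀ i, s ≤ k i) : ∑ i, ‖w i‖ ^ k i ≤ Fintype.card ι * ‖w‖ ^ s := by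
  calc ∑ i, ‖w i‖ ^ k i ≤ ∑ _i : ι, ‖w‖ ^ s := by
        refine Finset.sum_le_sum fun i _ => ?_
        have hwi := PiLp.norm_apply_le w i
        calc ‖w i‖ ^ k i ≤ ‖w i‖ ^ s := pow_le_pow_of_le_one (norm_nonneg _) (hwi.trans hw) (hs i)
          _ ≤ ‖w‖ ^ s := pow_le_pow_left₀ (norm_nonneg _) hwi s
    _ = Fintype.card ι * ‖w‖ ^ s := by simp

end ModelFunction

lemma sq_le_of_sq_add_sq_le_add_sq {a b C t : ℝ} (ha : a ≤ 1) (hC : 0 ≤ C)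
    (ht : 0 ≤ t) (ht1 : t ≤ 1) (hab : a ^ 2 + b ^ 2 ≤ (a + C * t) ^ 2) :
    b ^ 2 ≤ (C ^ 2 + 2 * C) * t := by
  nlinarith [mul_le_mul_of_nonneg_right ha (mul_nonneg hC ht),
    mul_le_mul_of_nonneg_left (mul_le_of_le_one_left ht ht1) (sq_nonneg C)]

lemma one_le_mul_rpow_sub_of_le_mul_rpow {b η τ p K M : ℝ} (hb : 0 < b) (hη : 0 < η)
    (hτ : 0 < τ) (hM : 0 ≤ M) (hup : η ≤ K * b ^ p) (hlow : b ^ 2 ≤ M * η ^ (1 / τ)) :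
    1 ≤ M ^ τ * K * b ^ (p - 2 * τ) := by
  have hb2τ : 0 < b ^ (2 * τ) := Real.rpow_pos_of_pos hb _
  have hgain : b ^ (2 * τ) ≤ M ^ τ * K * b ^ (p - 2 * τ) * b ^ (2 * τ) :=
    calc b ^ (2 * τ) = (b ^ 2) ^ τ := by
          rw [← Real.rpow_natCast, ← Real.rpow_mul hb.le]; norm_num
      _ ≤ (M * η ^ (1 / τ)) ^ τ := Real.rpow_le_rpow (by positivity) hlow hτ.le
      _ = M ^ τ * η := by
          rw [Real.mul_rpow hM (by positivity), ← Real.rpow_mul hη.le, one_div_mul_cancel hτ.ne',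
            Real.rpow_one]
      _ ≤ M ^ τ * (K * b ^ p) := mul_le_mul_of_nonneg_left hup (Real.rpow_nonneg hM _)
      _ = M ^ τ * K * b ^ (p - 2 * τ) * b ^ (2 * τ) := by
          rw [mul_assoc _ (b ^ _), ← Real.rpow_add hb]; ring_nf
  exact le_of_mul_le_mul_right (by simpa using hgain) hb2τ

lemma tendsto_const_mul_rpow_nhds_zero (A : ℝ) {p : ℝ} (hp : 0 < p) :
    Tendsto (fun x : ℝ => A * x ^ p) (𝓝 0) (𝓝 0) := by
  have hcont : ContinuousAt (fun x : ℝ => A * x ^ p) 0 :=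
    continuousAt_const.mul (Real.continuousAt_rpow_const 0 p (Or.inr hp.le))
  simpa [Real.zero_rpow hp.ne'] using hcont.tendsto

section Minimizer

variable {E F : Type*} [NormedAddCommGroup E] [NormedAddCommGroup F] {ρ : E → ℝ} {h : F → ℝ}
  {P0 : E} {δ : ℝ}

lemma sq_add_sq_le_of_minimizer (h0 : h 0 = 0) {Q₁ : E} {w : F}
    (hmin : ∀ (Q' : E) (w' : F), ρ Q' + h w' = δ →
      ‖Q₁ - P0‖ ^ 2 + ‖w‖ ^ 2 ≤ ‖Q' - P0‖ ^ 2 + ‖w'‖ ^ 2)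
    {Q : E} (hQ : ρ Q = δ) : ‖Q₁ - P0‖ ^ 2 + ‖w‖ ^ 2 ≤ ‖Q - P0‖ ^ 2 := by
  simpa using hmin Q 0 (by rw [h0, hQ, add_zero])

lemma minimizer_snd_eq_zero {τ p C K : ℝ} (hτ : 0 < τ) (hp : 2 * τ < p) (hC : 0 ≤ C)
    (hK : 0 ≤ K) (hP0 : ρ P0 = 0)
    (hft : ∀ z : E, ‖z - P0‖ ≤ 1 → ∀ η : ℝ, 0 < η → η ≤ 1 →
      ∃ z' : E, ρ z' = ρ z + η ∧ ‖z' - z‖ ≤ C * η ^ (1 / τ))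
    (h0 : h 0 = 0) (hpos : ∀ w, w ≠ 0 → 0 < h w) (hup : ∀ w, ‖w‖ ≤ 1 → h w ≤ K * ‖w‖ ^ p)
    (hδ : 0 < δ) (hδ1 : δ ≤ 1) (hε1 : C * δ ^ (1 / τ) ≤ 1) (hεK : K * (C * δ ^ (1 / τ)) ^ p ≤ 1)
    (hεgain : (C ^ 2 + 2 * C) ^ τ * K * (C * δ ^ (1 / τ)) ^ (p - 2 * τ) < 1)
    {Q₁ : E} {w : F} (hmem : ρ Q₁ + h w = δ)
    (hmin : ∀ (Q' : E) (w' : F), ρ Q' + h w' = δ →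
      ‖Q₁ - P0‖ ^ 2 + ‖w‖ ^ 2 ≤ ‖Q' - P0‖ ^ 2 + ‖w'‖ ^ 2) :
    w = 0 := by
  set ε := C * δ ^ (1 / τ)
  have hε : 0 ≤ ε := by positivity
  obtain ⟨Z, hZρ, hZ⟩ := hft P0 (by simp) δ hδ hδ1
  have hnear : ‖Q₁ - P0‖ ^ 2 + ‖w‖ ^ 2 ≤ ε ^ 2 :=
    (sq_add_sq_le_of_minimizer h0 hmin (by rw [hZρ, hP0, zero_add])).trans
      (pow_le_pow_left₀ (norm_nonneg _) hZ 2)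
  have hQ₁ : ‖Q₁ - P0‖ ≤ ε :=
    le_of_pow_le_pow_left₀ two_ne_zero hε (by nlinarith [sq_nonneg ‖w‖])
  have hw : ‖w‖ ≤ ε :=
    le_of_pow_le_pow_left₀ two_ne_zero hε (by nlinarith [sq_nonneg ‖Q₁ - P0‖])
  by_contra hw0
  set η := h w
  have hη : 0 < η := hpos w hw0
  have hηK : η ≤ K * ‖w‖ ^ p := hup w (hw.trans hε1)
  have hη1 : η ≤ 1 := hηK.trans <|
    (mul_le_mul_of_nonneg_left (Real.rpow_le_rpow (norm_nonneg _) hw (by linarith)) hK).trans hεK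
  obtain ⟨Q₂, hQ₂ρ, hQ₂⟩ := hft Q₁ (hQ₁.trans hε1) η hη hη1
  have hfar : ‖Q₁ - P0‖ ^ 2 + ‖w‖ ^ 2 ≤ (‖Q₁ - P0‖ + C * η ^ (1 / τ)) ^ 2 := by
    refine (sq_add_sq_le_of_minimizer h0 hmin (by rw [hQ₂ρ, hmem])).trans ?_
    refine pow_le_pow_left₀ (norm_nonneg _) ?_ 2
    calc ‖Q₂ - P0‖ ≤ ‖Q₂ - Q₁‖ + ‖Q₁ - P0‖ := norm_sub_le_norm_sub_add_norm_sub _ _ _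
      _ ≤ ‖Q₁ - P0‖ + C * η ^ (1 / τ) := by linarith
  have hw2 := sq_le_of_sq_add_sq_le_add_sq (hQ₁.trans hε1) hC (by positivity)
    (Real.rpow_le_one hη.le hη1 (by positivity)) hfar
  have hgain := one_le_mul_rpow_sub_of_le_mul_rpow (norm_pos_iff.mpr hw0) hη hτ (by positivity)
    hηK hw2
  have hsmall : (C ^ 2 + 2 * C) ^ τ * K * ‖w‖ ^ (p - 2 * τ) ≤
      (C ^ 2 + 2 * C) ^ τ * K * ε ^ (p - 2 * τ) :=
    mul_le_mul_of_nonneg_left (Real.rpow_le_rpow (norm_nonneg _) hw (by linarith)) (by positivity)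
  linarith

theorem eventually_minimizer_snd_eq_zero {τ p C K : ℝ} (hτ : 0 < τ) (hp : 2 * τ < p)
    (hC : 0 ≤ C) (hK : 0 ≤ K) (hP0 : ρ P0 = 0)
    (hft : ∀ z : E, ‖z - P0‖ ≤ 1 → ∀ η : ℝ, 0 < η → η ≤ 1 →
      ∃ z' : E, ρ z' = ρ z + η ∧ ‖z' - z‖ ≤ C * η ^ (1 / τ))
    (h0 : h 0 = 0) (hpos : ∀ w, w ≠ 0 → 0 < h w) (hup : ∀ w, ‖w‖ ≤ 1 → h w ≤ K * ‖w‖ ^ p) :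
    ∀ᶠ δ in 𝓝[>] 0, ∀ (Q₁ : E) (w : F), ρ Q₁ + h w = δ →
      (∀ (Q' : E) (w' : F), ρ Q' + h w' = δ →
        ‖Q₁ - P0‖ ^ 2 + ‖w‖ ^ 2 ≤ ‖Q' - P0‖ ^ 2 + ‖w'‖ ^ 2) → w = 0 := by
  have hε : Tendsto (fun δ : ℝ => C * δ ^ (1 / τ)) (𝓝[>] 0) (𝓝 0) :=
    tendsto_const_mul_rpow_nhds_zero C (by positivity) |>.mono_left nhdsWithin_le_nhds
  have hsmall : ∀ᶠ ε in 𝓝 (0 : ℝ), ε < 1 ∧ K * ε ^ p < 1 ∧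
      (C ^ 2 + 2 * C) ^ τ * K * ε ^ (p - 2 * τ) < 1 :=
    (eventually_lt_nhds one_pos).and <|
      ((tendsto_const_mul_rpow_nhds_zero K (by linarith)).eventually_lt_const one_pos).and
      ((tendsto_const_mul_rpow_nhds_zero _ (by linarith)).eventually_lt_const one_pos)
  filter_upwards [self_mem_nhdsWithin, nhdsWithin_le_nhds (eventually_lt_nhds one_pos),
    hε.eventually hsmall] with δ hδ hδ1 ⟨hε1, hεK, hεgain⟩ Q₁ w hmem hmin
  exact minimizer_snd_eq_zero hτ hp hC hK hP0 hft h0 hpos hup hδ hδ1.le hε1.le hεK.le hεgain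
    hmem hmin

end Minimizer

theorem stmt19_general (n mdim : ℕ) (τ : ℝ) (hτ : 1 ≤ τ)
    (q : Fin mdim → ℕ) (hq : ∀ i, τ < (q i : ℝ))
    (ρ : EuclideanSpace ℂ (Fin n) → ℝ)
    (P0 : EuclideanSpace ℂ (Fin n)) (hP0 : ρ P0 = 0)
    (C : ℝ) (hC : 0 < C)
    -- consequence of finite type τ: one can raise the level of ρ by η moving at most C η^{1/τ}
    (hft : ∀ z : EuclideanSpace ℂ (Fin n), ‖z - P0‖ ≤ 1 → ∀ η : ℝ, 0 < η → η ≤ 1 →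
      ∃ z' : EuclideanSpace ℂ (Fin n), ρ z' = ρ z + η ∧ ‖z' - z‖ ≤ C * η ^ (1/τ))
    (h : EuclideanSpace ℂ (Fin mdim) → ℝ)
    (c₁ c₂ : ℝ) (hc₁ : 0 < c₁) (hc₂ : 0 < c₂)
    (hcomp : ∀ w : EuclideanSpace ℂ (Fin mdim),
      c₁ * ∑ i, ‖w i‖ ^ (2 * q i) ≤ h w ∧
      h w ≤ c₂ * ∑ i, ‖w i‖ ^ (2 * q i)) :
    ∃ δ₀ : ℝ, 0 < δ₀ ∧ ∀ δ : ℝ, 0 < δ → δ < δ₀ →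
      ∀ (Q₁ : EuclideanSpace ℂ (Fin n)) (w : EuclideanSpace ℂ (Fin mdim)),
        ρ Q₁ + h w = δ →
        (∀ (Q' : EuclideanSpace ℂ (Fin n)) (w' : EuclideanSpace ℂ (Fin mdim)),
          ρ Q' + h w' = δ →
          ‖Q₁ - P0‖ ^ 2 + ‖w‖ ^ 2 ≤ ‖Q' - P0‖ ^ 2 + ‖w'‖ ^ 2) →
        w = 0 ∧ ρ Q₁ = δ := by
  have hτ0 : 0 < τ := one_pos.trans_le hτ
  -- `s` is the least integer above `2τ`, hence below every exponent `2 qᵢ`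
  set s := ⌊2 * τ⌋₊ + 1
  have hs : 2 * τ < s := by exact_mod_cast Nat.lt_floor_add_one (2 * τ)
  have hsq : ∀ i, s ≤ 2 * q i := fun i =>
    (Nat.floor_lt (by positivity)).mpr (by push_cast; linarith [hq i])
  have h0 : h 0 = 0 := by
    have hq0 : ∀ i, 2 * q i ≠ 0 := fun i => by have := hsq i; omega
    have := hcomp 0
    simp only [PiLp.zero_apply, norm_zero, zero_pow (hq0 _), Finset.sum_const_zero,
      mul_zero] at this
    exact le_antisymm this.2 this.1
  have hpos : ∀ w, w ≠ 0 → 0 < h w := fun w hw =>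
    (mul_pos hc₁ (sum_norm_pow_pos hw _)).trans_le (hcomp w).1
  have hup : ∀ w : EuclideanSpace ℂ (Fin mdim), ‖w‖ ≤ 1 → h w ≤ c₂ * mdim * ‖w‖ ^ (s : ℝ) :=
    fun w hw => calc
      h w ≤ c₂ * ∑ i, ‖w i‖ ^ (2 * q i) := (hcomp w).2
      _ ≤ c₂ * (Fintype.card (Fin mdim) * ‖w‖ ^ s) :=
        mul_le_mul_of_nonneg_left (sum_norm_pow_le_card_mul hw hsq) hc₂.le
      _ = c₂ * mdim * ‖w‖ ^ (s : ℝ) := by simp [Real.rpow_natCast, mul_assoc]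
  obtain ⟨δ₀, hδ₀, hsub⟩ := mem_nhdsGT_iff_exists_Ioo_subset.mp <|
    eventually_minimizer_snd_eq_zero hτ0 hs hC.le (by positivity) hP0 hft h0 hpos hup
  refine ⟨δ₀, hδ₀, fun δ hδ hδδ₀ Q₁ w hmem hmin => ?_⟩
  have hw : w = 0 := hsub ⟨hδ, hδδ₀⟩ Q₁ w hmem hmin
  exact ⟨hw, by rwa [hw, h0, add_zero] at hmem⟩

/-- boundary distance comparison forcing the minimizer onto the slice:
for a convex domain of finite type τ (expressed through the distance estimate
dist(z, {ρ = ρ(z)+η}) ≤ C η^{1/τ}) and h ≍ ∑|w_i|^{2q_i} with all q_i > τ, for all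
sufficiently small δ > 0, any point (Q₁,w) of H̃_δ = {ρ(z)+h(w) = δ} minimizing the
Euclidean distance to (P₀,0) has w = 0, i.e. ρ(Q₁) = δ. -/
theorem stmt19 (n mdim : ℕ) (τ : ℝ) (hτ : 1 ≤ τ)
    (q : Fin mdim → ℕ) (hq : ∀ i, τ < (q i : ℝ))
    (Ω : Set (EuclideanSpace ℂ (Fin n))) (hconv : Convex ℝ Ω) (hopen : IsOpen Ω)
    (hbdd : Bornology.IsBounded Ω)
    (ρ : EuclideanSpace ℂ (Fin n) → ℝ) (hρc : Continuous ρ)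
    (hΩ : Ω = {z | ρ z < 0})
    (P0 : EuclideanSpace ℂ (Fin n)) (hP0 : ρ P0 = 0)
    (C : ℝ) (hC : 0 < C)
    -- consequence of finite type τ: one can raise the level of ρ by η moving at most C η^{1/τ}
    (hft : ∀ z : EuclideanSpace ℂ (Fin n), ‖z - P0‖ ≤ 1 → ∀ η : ℝ, 0 < η → η ≤ 1 →
      ∃ z' : EuclideanSpace ℂ (Fin n), ρ z' = ρ z + η ∧ ‖z' - z‖ ≤ C * η ^ (1/τ))
    (h : EuclideanSpace ℂ (Fin mdim) → ℝ)
    (c₁ c₂ : ℝ) (hc₁ : 0 < c₁) (hc₂ : 0 < c₂)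
    (hcomp : ∀ w : EuclideanSpace ℂ (Fin mdim),
      c₁ * ∑ i, ‖w i‖ ^ (2 * q i) ≤ h w ∧
      h w ≤ c₂ * ∑ i, ‖w i‖ ^ (2 * q i)) :
    ∃ δ₀ : ℝ, 0 < δ₀ ∧ ∀ δ : ℝ, 0 < δ → δ < δ₀ →
      ∀ (Q₁ : EuclideanSpace ℂ (Fin n)) (w : EuclideanSpace ℂ (Fin mdim)),
        ρ Q₁ + h w = δ →
        (∀ (Q' : EuclideanSpace ℂ (Fin n)) (w' : EuclideanSpace ℂ (Fin mdim)),
          ρ Q' + h w' = δ →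
          ‖Q₁ - P0‖ ^ 2 + ‖w‖ ^ 2 ≤ ‖Q' - P0‖ ^ 2 + ‖w'‖ ^ 2) →
        w = 0 ∧ ρ Q₁ = δ :=
  stmt19_general n mdim τ hτ q hq ρ P0 hP0 C hC hft h c₁ c₂ hc₁ hc₂ hcomp
end
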